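/- arXiv:1907.07097 — 4 statements merged into one kernel-verified Lean document; each statement's English description precedes it below -/
import Mathlib

section
/- Let q be odd. Let n ≥ 1, let M be an n×n symmetric matrix over O with det M ≠ 0, set F(x) = xᵀMx and F*(w) = wᵀ·adj(M)·w where adj(M) is the adjugate matrix of M. Let ϖ ∈ O be monic irreducible with ϖ ∤ det M, let k ≥ 1 be an even integer and v ∈ O^n, and set S = Σ_{a} Σ_{x} ψ((a·F(x) − v·x)/ϖ^k), where a runs over elements of O with |a| < |ϖ|^k and gcd(a,ϖ) = 1, and x runs over O^n with |x| < |ϖ|^k. Then S = |ϖ|^{nk/2}·(|ϖ|^k·δ₁ − |ϖ|^{k−1}·δ₂), where δ₁ = 1 if ϖ^k ∣ F*(v) and δ₁ = 0 otherwise, and δ₂ = 1 if ϖ^{k−1} ∣ F*(v) and δ₂ = 0 otherwise. -/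
set_option autoImplicit false

noncomputable section

open Polynomial Matrix
open scoped Classical

variable {Fq : Type} [Field Fq] [Fintype Fq]

/-- The absolute value on `O = Fq[t]`: `|x| = q ^ deg x` for `x ≠ 0`, and `|0| = 0`. -/
def Oabs (x : Fq[X]) : ℝ := if x = 0 then 0 else (Fintype.card Fq : ℝ) ^ x.natDegree

/-- The maximum norm on pairs of polynomials. -/
def Oabs2 (a : Fq[X] × Fq[X]) : ℝ := max (Oabs a.1) (Oabs a.2)

/-- A pair `c = (c₁, c₂)` is primitive if `gcd(c₁,c₂) = 1` and either `c₁` is monic,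
or `c₁ = 0` and `c₂` is monic. -/
def Primitive (c : Fq[X] × Fq[X]) : Prop :=
  IsCoprime c.1 c.2 ∧ (c.1.Monic ∨ (c.1 = 0 ∧ c.2.Monic))

/-- `gcd(a, b, r) = 1`: every common divisor of `a`, `b` and `r` is a unit. -/
def CoprimeTriple (a b r : Fq[X]) : Prop :=
  ∀ p : Fq[X], p ∣ a → p ∣ b → p ∣ r → IsUnit p

/-- `a/r` lies on the generalised line `L(d·c)`: there is `k` with
`d(c₁a₁ + c₂a₂) = k·r` and `gcd(d,k) = 1`. -/
def OnLine (d : Fq[X]) (c : Fq[X] × Fq[X]) (r : Fq[X]) (a : Fq[X] × Fq[X]) : Prop :=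
  ∃ k : Fq[X], d * (c.1 * a.1 + c.2 * a.2) = k * r ∧ IsCoprime d k

/-- The embedding of `O = Fq[t]` into `K_∞ = Fq((1/t))`, realised as formal Laurent
series in the variable `u = t⁻¹`; the polynomial variable `t` is sent to `u⁻¹`. -/
def OtoK : Fq[X] →+* LaurentSeries Fq :=
  Polynomial.eval₂RingHom HahnSeries.C (HahnSeries.single (-1 : ℤ) 1)

/-- The absolute value on `K_∞`: `|x| = q^{deg x}`, i.e. `q^{-ord_u x}` where `u = t⁻¹`. -/
def Kabs (x : LaurentSeries Fq) : ℝ :=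
  if x = 0 then 0 else (Fintype.card Fq : ℝ) ^ (-x.order)

/-!
Write `k = 2m` and `x = x₀ + ϖ^m y` with `x₀, y` residues modulo `ϖ^m`. Modulo `ϖ^k` the phase
`a F(x) - v·x` is `a F(x₀) - v·x₀ + ϖ^m (2aMx₀ - v)·y`, so the sum over `y` is an orthogonality
relation forcing `2aMx₀ ≡ v (mod ϖ^m)`. Its only solution is `x₀ ≡ -2s adj(M) v` with
`s ≡ -(4a det M)⁻¹ (mod ϖ^k)`, where the phase is `s F*(v)`. Hence the inner sum is
`|ϖ|^{nk/2} ψ(s F*(v)/ϖ^k)`, and `a ↦ s` is an involution of the units modulo `ϖ^k`. The resulting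
sum over units is the complete sum modulo `ϖ^k` minus the sum over multiples of `ϖ`, both given
by orthogonality. Orthogonality modulo `ϖ^j` needs `ψ(·/ϖ)` to be nontrivial on `Fq[X]`: this
holds because `ψ` is trivial on `|x| ≤ q⁻²` but not on `|x| ≤ q⁻¹`.
-/

section CommRing

variable {R : Type*} [CommRing R]

/-- Some inverse of `a` modulo `g`; junk value `0` if there is none. -/
def invMod (g a : R) : R :=
  if h : ∃ e, g ∣ a * e - 1 then h.choose else 0

theorem dvd_mul_invMod_sub_one {g a : R} (h : IsCoprime a g) : g ∣ a * invMod g a - 1 := by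
  have hex : ∃ e, g ∣ a * e - 1 := by
    obtain ⟨s, t, hst⟩ := h
    exact ⟨s, -t, by linear_combination hst⟩
  rw [invMod, dif_pos hex]
  exact hex.choose_spec

theorem exists_mul_sub_pow_dvd [IsDomain R] [IsPrincipalIdealRing R] {ϖ p : R}
    (hϖ : Irreducible ϖ) {j : ℕ} (hp : ¬ϖ ^ (j + 1) ∣ p) : ∃ z, ϖ ^ (j + 1) ∣ p * z - ϖ ^ j := by
  obtain ⟨t, u, hu, rfl⟩ := WfDvdMonoid.max_power_factor (a₀ := p) (by rintro rfl; simp at hp) hϖ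
  have ht : t ≤ j := by
    by_contra! h
    exact hp (dvd_mul_of_dvd_left (pow_dvd_pow ϖ h) u)
  obtain ⟨a, b, hab⟩ := ((hϖ.coprime_iff_not_dvd.2 hu).symm.pow_right (n := j + 1))
  refine ⟨a * ϖ ^ (j - t), -(ϖ ^ j * b), ?_⟩
  have hpow : ϖ ^ t * ϖ ^ (j - t) = ϖ ^ j := by rw [← pow_add, Nat.add_sub_cancel' ht]
  linear_combination (u * a) * hpow + ϖ ^ j * hab

theorem dvd_modByMonic_sub {g : R[X]} (p : R[X]) : g ∣ p %ₘ g - p :=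
  ⟨-(p /ₘ g), by linear_combination modByMonic_add_div p g⟩

theorem mul_divByMonic_of_dvd {g p : R[X]} (hg : g.Monic) (hp : g ∣ p) : g * (p /ₘ g) = p := by
  simpa [(modByMonic_eq_zero_iff_dvd hg).2 hp] using modByMonic_add_div p g

section Matrix

variable {ι : Type*} [Fintype ι] (M : Matrix ι ι R)

theorem dvd_mulVec_apply {g : R} {u : ι → R} (hu : ∀ j, g ∣ u j) (i : ι) : g ∣ (M *ᵥ u) i :=
  Finset.dvd_sum fun j _ ↦ dvd_mul_of_dvd_right (hu j) _

theorem gradient_add_smul (a g : R) (v x y : ι → R) :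
    (2 * a) • M *ᵥ (x + g • y) - v = ((2 * a) • M *ᵥ x - v) + g • ((2 * a) • M *ᵥ y) := by
  rw [Matrix.mulVec_add, Matrix.mulVec_smul, smul_add, smul_comm]
  abel

theorem quadratic_add_smul {M : Matrix ι ι R} (hM : M.IsSymm) (a g : R) (v x y : ι → R) :
    a * ((x + g • y) ⬝ᵥ M *ᵥ (x + g • y)) - v ⬝ᵥ (x + g • y) =
      (a * (x ⬝ᵥ M *ᵥ x) - v ⬝ᵥ x) + g * (((2 * a) • M *ᵥ x - v) ⬝ᵥ y) +
        g * g * (a * (y ⬝ᵥ M *ᵥ y)) := by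
  have hsymm : y ⬝ᵥ M *ᵥ x = x ⬝ᵥ M *ᵥ y := by
    rw [Matrix.dotProduct_mulVec, ← Matrix.mulVec_transpose, hM.eq, dotProduct_comm]
  simp only [Matrix.mulVec_add, Matrix.mulVec_smul, dotProduct_add, add_dotProduct,
    dotProduct_smul, smul_dotProduct, sub_dotProduct, smul_eq_mul, dotProduct_comm (M *ᵥ x) y,
    hsymm]
  ring

theorem mulVec_adjugate_mulVec [DecidableEq ι] (v : ι → R) :
    M *ᵥ (M.adjugate *ᵥ v) = M.det • v := by
  rw [Matrix.mulVec_mulVec, Matrix.mul_adjugate, Matrix.smul_mulVec, Matrix.one_mulVec]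

theorem gradient_smul_adjugate [DecidableEq ι] (a s : R) (v : ι → R) :
    (2 * a) • M *ᵥ ((-2 * s) • M.adjugate *ᵥ v) - v = -(4 * M.det * a * s + 1) • v := by
  rw [Matrix.mulVec_smul, mulVec_adjugate_mulVec, smul_smul, smul_smul]
  ext i
  simp only [Pi.sub_apply, Pi.smul_apply, smul_eq_mul]
  ring

theorem quadratic_smul_adjugate [DecidableEq ι] (a s : R) (v : ι → R) :
    a * (((-2 * s) • M.adjugate *ᵥ v) ⬝ᵥ M *ᵥ ((-2 * s) • M.adjugate *ᵥ v)) -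
        v ⬝ᵥ ((-2 * s) • M.adjugate *ᵥ v) =
      s * (v ⬝ᵥ M.adjugate *ᵥ v) + (4 * M.det * a * s + 1) * (s * (v ⬝ᵥ M.adjugate *ᵥ v)) := by
  simp only [Matrix.mulVec_smul, mulVec_adjugate_mulVec, dotProduct_smul, smul_dotProduct,
    dotProduct_comm (M.adjugate *ᵥ v) v, smul_eq_mul]
  ring

theorem sub_smul_adjugate_eq [DecidableEq ι] (a s : R) (v x : ι → R) :
    x - (-2 * s) • M.adjugate *ᵥ v =
      (-2 * s) • M.adjugate *ᵥ ((2 * a) • M *ᵥ x - v) + (4 * M.det * a * s + 1) • x := by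
  rw [Matrix.mulVec_sub, Matrix.mulVec_smul, Matrix.mulVec_mulVec, Matrix.adjugate_mul,
    Matrix.smul_mulVec, Matrix.one_mulVec]
  ext i
  simp only [Pi.sub_apply, Pi.add_apply, Pi.smul_apply, smul_eq_mul]
  ring

end Matrix

end CommRing

theorem AddChar.map_eq_of_map_sub_eq_one {A M : Type*} [AddCommGroup A] [Monoid M]
    (ψ : AddChar A M) {x y : A} (h : ψ (x - y) = 1) : ψ x = ψ y := by
  rw [← add_sub_cancel y x, ψ.map_add_eq_mul, h, mul_one]

section Embedding

omit [Fintype Fq]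

theorem OtoK_C_mul_X_pow (a : Fq) (i : ℕ) :
    OtoK (C a * X ^ i) = HahnSeries.single (-(i : ℤ)) a := by
  have hC : OtoK (C a) = HahnSeries.single 0 a := Polynomial.eval₂_C _ _
  have hX : OtoK (X : Fq[X]) = HahnSeries.single (-1) 1 := Polynomial.eval₂_X _ _
  rw [map_mul, map_pow, hC, hX, HahnSeries.single_pow, HahnSeries.single_mul_single]
  simp

theorem coeff_OtoK (p : Fq[X]) (j : ℤ) :
    (OtoK p).coeff j = if j ≤ 0 then p.coeff (-j).toNat else 0 := by
  induction p using Polynomial.induction_on' with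
  | add p q hp hq =>
    rw [map_add, HahnSeries.coeff_add, hp, hq, coeff_add]
    split_ifs <;> simp
  | monomial i a =>
    rw [← C_mul_X_pow_eq_monomial, OtoK_C_mul_X_pow, HahnSeries.coeff_single, coeff_C_mul_X_pow]
    split_ifs <;> first | rfl | (exfalso; omega)

theorem OtoK_injective : Function.Injective (OtoK : Fq[X] → LaurentSeries Fq) := by
  intro p q h
  ext i
  have := congrArg (fun x ↦ HahnSeries.coeff x (-(i : ℤ))) h
  simpa [coeff_OtoK] using this

theorem OtoK_ne_zero {p : Fq[X]} (hp : p ≠ 0) : OtoK p ≠ 0 :=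
  (map_ne_zero_iff _ OtoK_injective).2 hp

theorem order_OtoK {p : Fq[X]} (hp : p ≠ 0) : (OtoK p).order = -(p.natDegree : ℤ) := by
  refine le_antisymm (HahnSeries.order_le_of_coeff_ne_zero ?_) ?_
  · simpa [coeff_OtoK] using hp
  · refine (HahnSeries.le_order_iff_forall (OtoK_ne_zero hp)).2 fun j hj ↦ ?_
    rw [coeff_OtoK, if_pos (by omega)]
    exact coeff_eq_zero_of_natDegree_lt (by omega)

end Embedding

theorem one_lt_cast_card : (1 : ℝ) < Fintype.card Fq := by
  exact_mod_cast Fintype.one_lt_card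

theorem Kabs_le_zpow_neg_iff (x : LaurentSeries Fq) (N : ℤ) :
    Kabs x ≤ (Fintype.card Fq : ℝ) ^ (-N) ↔ (N : WithTop ℤ) ≤ x.orderTop := by
  rcases eq_or_ne x 0 with rfl | hx
  · simp [Kabs]
    positivity
  · rw [Kabs, if_neg hx, ← HahnSeries.order_eq_orderTop_of_ne_zero hx, WithTop.coe_le_coe,
      zpow_le_zpow_iff_right₀ one_lt_cast_card, neg_le_neg_iff]

theorem exists_single_one_ne_one {ψ : AddChar (LaurentSeries Fq) ℂ}
    (hψ_small : ∀ x, Kabs x ≤ (Fintype.card Fq : ℝ) ^ (-2 : ℤ) → ψ x = 1)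
    (hψ_ne : ∃ x, Kabs x ≤ (Fintype.card Fq : ℝ) ^ (-1 : ℤ) ∧ ψ x ≠ 1) :
    ∃ c : Fq, ψ (HahnSeries.single 1 c) ≠ 1 := by
  obtain ⟨x, hx, hψx⟩ := hψ_ne
  refine ⟨x.coeff 1, fun h ↦ hψx ?_⟩
  rw [← h]
  refine ψ.map_eq_of_map_sub_eq_one (hψ_small _ ?_)
  rw [Kabs_le_zpow_neg_iff, HahnSeries.le_orderTop_iff_forall]
  rw [Kabs_le_zpow_neg_iff, HahnSeries.le_orderTop_iff_forall] at hx
  intro j hj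
  rcases lt_or_eq_of_le (Int.lt_add_one_iff.1 (WithTop.coe_lt_coe.1 hj : j < 1 + 1)) with hj | rfl
  · simp [hx j (WithTop.coe_lt_coe.2 hj), hj.ne]
  · simp

theorem Kabs_OtoK_div_sub_single_le {ϖ : Fq[X]} (hϖ : ϖ.Monic) (hd : ϖ.natDegree ≠ 0) (c : Fq) :
    Kabs (OtoK (C c * X ^ (ϖ.natDegree - 1)) / OtoK ϖ - HahnSeries.single 1 c) ≤
      (Fintype.card Fq : ℝ) ^ (-2 : ℤ) := by
  set d := ϖ.natDegree
  set y := OtoK (C c * X ^ (d - 1)) / OtoK ϖ - HahnSeries.single 1 c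
  have hϖ0 : OtoK ϖ ≠ 0 := OtoK_ne_zero hϖ.ne_zero
  have hy : y * OtoK ϖ = HahnSeries.single 1 c * OtoK (X ^ d - ϖ) := by
    have hXd : OtoK (X ^ d : Fq[X]) = HahnSeries.single (-(d : ℤ)) 1 := by
      simpa using OtoK_C_mul_X_pow (1 : Fq) d
    rw [sub_mul, div_mul_cancel₀ _ hϖ0, map_sub, mul_sub, hXd, HahnSeries.single_mul_single,
      OtoK_C_mul_X_pow, mul_one, Nat.cast_sub (Nat.one_le_iff_ne_zero.2 hd)]
    congr 3
    ring
  rw [Kabs_le_zpow_neg_iff]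
  rcases eq_or_ne y 0 with hy0 | hy0
  · simp [hy0]
  have hprod : HahnSeries.single 1 c * OtoK (X ^ d - ϖ) ≠ 0 := hy ▸ mul_ne_zero hy0 hϖ0
  have hc : c ≠ 0 := fun h ↦ hprod (by simp [h])
  have hr : X ^ d - ϖ ≠ 0 := fun h ↦ hprod (by simp [h])
  have hdeg : (X ^ d - ϖ).natDegree < d := by
    rw [natDegree_lt_iff_degree_lt hr]
    simpa using degree_sub_lt_left (q := ϖ) (by rw [degree_X_pow, degree_eq_natDegree hϖ.ne_zero])
      (pow_ne_zero d X_ne_zero) (by rw [leadingCoeff_X_pow, hϖ.leadingCoeff])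
  have hord := congrArg HahnSeries.order hy
  rw [HahnSeries.order_mul hy0 hϖ0, HahnSeries.order_mul (by simpa using hc) (OtoK_ne_zero hr),
    HahnSeries.order_single hc, order_OtoK hr, order_OtoK hϖ.ne_zero] at hord
  rw [← HahnSeries.order_eq_orderTop_of_ne_zero hy0, WithTop.coe_le_coe]
  omega

section Residues

/-- A system of representatives of `Fq[X]` modulo a monic `g`. -/
def residues (g : Fq[X]) : Finset Fq[X] :=
  Finset.univ.image fun c ↦ ((degreeLTEquiv Fq g.natDegree).symm c : Fq[X])

variable {g h : Fq[X]}

theorem mem_residues {p : Fq[X]} : p ∈ residues g ↔ p.degree < g.natDegree := by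
  simp only [residues, Finset.mem_image, Finset.mem_univ, true_and]
  refine ⟨fun ⟨c, hc⟩ ↦ hc ▸ mem_degreeLT.1 ((degreeLTEquiv Fq _).symm c).2, fun hp ↦ ?_⟩
  exact ⟨degreeLTEquiv Fq _ ⟨p, mem_degreeLT.2 hp⟩, by simp⟩

theorem zero_mem_residues (g : Fq[X]) : 0 ∈ residues g :=
  mem_residues.2 (by simp)

theorem card_residues (g : Fq[X]) : (residues g).card = Fintype.card Fq ^ g.natDegree := by
  rw [residues, Finset.card_image_of_injective _
    fun a b h ↦ (degreeLTEquiv Fq _).symm.injective (Subtype.ext h)]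
  simp

theorem mem_residues_of_monic (hg : g.Monic) {p : Fq[X]} :
    p ∈ residues g ↔ p.degree < g.degree := by
  rw [mem_residues, degree_eq_natDegree hg.ne_zero]

theorem modByMonic_mem_residues (hg : g.Monic) (p : Fq[X]) : p %ₘ g ∈ residues g :=
  (mem_residues_of_monic hg).2 (degree_modByMonic_lt p hg)

theorem eq_of_mem_residues_of_dvd_sub (hg : g.Monic) {a b : Fq[X]} (ha : a ∈ residues g)
    (hb : b ∈ residues g) (h : g ∣ a - b) : a = b := by
  rw [mem_residues_of_monic hg] at ha hb
  exact sub_eq_zero.1 (eq_zero_of_dvd_of_degree_lt h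
    ((degree_sub_le a b).trans_lt (max_lt ha hb)))

theorem add_mul_mem_residues (hg : g.Monic) (hh : h.Monic) {x y : Fq[X]} (hx : x ∈ residues g)
    (hy : y ∈ residues h) : x + g * y ∈ residues (g * h) := by
  rw [mem_residues] at hx hy ⊢
  rw [hg.natDegree_mul hh]
  refine (degree_add_le _ _).trans_lt (max_lt (hx.trans_le (by exact_mod_cast le_self_add)) ?_)
  rcases eq_or_ne y 0 with rfl | hy0
  · simp
  rw [degree_eq_natDegree (mul_ne_zero hg.ne_zero hy0), natDegree_mul hg.ne_zero hy0, Nat.cast_lt]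
  rw [degree_eq_natDegree hy0, Nat.cast_lt] at hy
  omega

theorem divByMonic_mem_residues (hg : g.Monic) (hh : h.Monic) {p : Fq[X]}
    (hp : p ∈ residues (g * h)) : p /ₘ g ∈ residues h := by
  rw [mem_residues] at hp ⊢
  rcases eq_or_ne (p /ₘ g) 0 with h0 | h0
  · simp [h0]
  have hp0 : p ≠ 0 := by rintro rfl; simp at h0
  have hgp : g.natDegree ≤ p.natDegree :=
    natDegree_le_natDegree (not_lt.1 ((divByMonic_eq_zero_iff hg).not.1 h0))
  rw [degree_eq_natDegree h0, Nat.cast_lt, natDegree_divByMonic _ hg]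
  rw [degree_eq_natDegree hp0, Nat.cast_lt, hg.natDegree_mul hh] at hp
  omega

theorem modByMonic_add_mul (hg : g.Monic) {x : Fq[X]} (hx : x ∈ residues g) (y : Fq[X]) :
    (x + g * y) %ₘ g = x :=
  (div_modByMonic_unique y x hg ⟨rfl, (mem_residues_of_monic hg).1 hx⟩).2

theorem divByMonic_add_mul (hg : g.Monic) {x : Fq[X]} (hx : x ∈ residues g) (y : Fq[X]) :
    (x + g * y) /ₘ g = y :=
  (div_modByMonic_unique y x hg ⟨rfl, (mem_residues_of_monic hg).1 hx⟩).1

variable {M : Type*} [AddCommMonoid M]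

theorem sum_residues_add_right (hg : g.Monic) {f : Fq[X] → M}
    (hf : ∀ p p', g ∣ p - p' → f p = f p') (w : Fq[X]) :
    ∑ z ∈ residues g, f (z + w) = ∑ z ∈ residues g, f z := by
  refine Finset.sum_nbij' (fun z ↦ (z + w) %ₘ g) (fun z ↦ (z - w) %ₘ g)
    (fun z _ ↦ modByMonic_mem_residues hg _) (fun z _ ↦ modByMonic_mem_residues hg _)
    (fun z hz ↦ ?_) (fun z hz ↦ ?_) (fun z _ ↦ hf _ _ ?_)
  · refine eq_of_mem_residues_of_dvd_sub hg (modByMonic_mem_residues hg _) hz ?_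
    convert dvd_add (dvd_modByMonic_sub ((z + w) %ₘ g - w)) (dvd_modByMonic_sub (z + w)) using 1
    ring
  · refine eq_of_mem_residues_of_dvd_sub hg (modByMonic_mem_residues hg _) hz ?_
    convert dvd_add (dvd_modByMonic_sub ((z - w) %ₘ g + w)) (dvd_modByMonic_sub (z - w)) using 1
    ring
  · rw [← neg_sub]
    exact dvd_neg.2 (dvd_modByMonic_sub _)

theorem sum_filter_dvd_residues_mul (hg : g.Monic) (hh : h.Monic) (f : Fq[X] → M) :
    ∑ p ∈ (residues (g * h)).filter (g ∣ ·), f p = ∑ y ∈ residues h, f (g * y) := by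
  refine Finset.sum_nbij' (· /ₘ g) (g * ·) (fun p hp ↦ ?_) (fun y hy ↦ ?_) (fun p hp ↦ ?_)
    (fun y _ ↦ mul_divByMonic_cancel_left y hg) (fun p hp ↦ ?_)
  · exact divByMonic_mem_residues hg hh (Finset.mem_filter.1 hp).1
  · refine Finset.mem_filter.2 ⟨?_, dvd_mul_right g y⟩
    simpa using add_mul_mem_residues hg hh (zero_mem_residues g) hy
  · exact mul_divByMonic_of_dvd hg (Finset.mem_filter.1 hp).2
  · rw [mul_divByMonic_of_dvd hg (Finset.mem_filter.1 hp).2]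

theorem sum_piFinset_residues_mul {ι : Type*} [Fintype ι] [DecidableEq ι] (hg : g.Monic)
    (hh : h.Monic) (f : (ι → Fq[X]) → M) :
    ∑ x ∈ Fintype.piFinset fun _ ↦ residues (g * h), f x =
      ∑ x ∈ Fintype.piFinset fun _ ↦ residues g,
        ∑ y ∈ Fintype.piFinset fun _ ↦ residues h, f (x + g • y) := by
  have hdecomp (x : ι → Fq[X]) : (fun i ↦ x i %ₘ g) + g • (fun i ↦ x i /ₘ g) = x :=
    funext fun i ↦ modByMonic_add_div (x i) g
  rw [← Finset.sum_product']
  refine Finset.sum_nbij' (fun x ↦ (fun i ↦ x i %ₘ g, fun i ↦ x i /ₘ g)) (fun p ↦ p.1 + g • p.2)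
    (fun x hx ↦ ?_) (fun p hp ↦ ?_) (fun x _ ↦ hdecomp x) (fun p hp ↦ ?_)
    (fun x _ ↦ by rw [hdecomp])
  · simp only [Finset.mem_product, Fintype.mem_piFinset] at hx ⊢
    exact ⟨fun i ↦ modByMonic_mem_residues hg _, fun i ↦ divByMonic_mem_residues hg hh (hx i)⟩
  · simp only [Finset.mem_product, Fintype.mem_piFinset] at hp ⊢
    exact fun i ↦ add_mul_mem_residues hg hh (hp.1 i) (hp.2 i)
  · simp only [Finset.mem_product, Fintype.mem_piFinset] at hp
    refine Prod.ext (funext fun i ↦ ?_) (funext fun i ↦ ?_)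
    · exact modByMonic_add_mul hg (hp.1 i) _
    · exact divByMonic_add_mul hg (hp.1 i) _

end Residues

theorem AddChar.map_finsetSum {A N ι : Type*} [AddCommMonoid A] [CommMonoid N] (ψ : AddChar A N)
    (s : Finset ι) (f : ι → A) : ψ (∑ i ∈ s, f i) = ∏ i ∈ s, ψ (f i) := by
  classical
  induction s using Finset.induction_on with
  | empty => simp
  | insert a s ha ih => rw [Finset.sum_insert ha, Finset.prod_insert ha, ψ.map_add_eq_mul, ih]

section CharMod

omit [Fintype Fq]

def charMod (ψ : AddChar (LaurentSeries Fq) ℂ) (g : Fq[X]) : AddChar Fq[X] ℂ :=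
  ψ.compAddMonoidHom ((AddMonoidHom.mulRight (OtoK g)⁻¹).comp OtoK.toAddMonoidHom)

variable {ψ : AddChar (LaurentSeries Fq) ℂ}

theorem charMod_apply (g p : Fq[X]) : charMod ψ g p = ψ (OtoK p / OtoK g) := by
  rw [div_eq_mul_inv]
  rfl

theorem charMod_eq_one_of_dvd (hψ : ∀ p, ψ (OtoK p) = 1) {g p : Fq[X]} (hg : g ≠ 0) (h : g ∣ p) :
    charMod ψ g p = 1 := by
  obtain ⟨c, rfl⟩ := h
  rw [charMod_apply, map_mul, mul_div_cancel_left₀ _ (OtoK_ne_zero hg), hψ]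

theorem charMod_congr (hψ : ∀ p, ψ (OtoK p) = 1) {g p p' : Fq[X]} (hg : g ≠ 0) (h : g ∣ p - p') :
    charMod ψ g p = charMod ψ g p' :=
  (charMod ψ g).map_eq_of_map_sub_eq_one (charMod_eq_one_of_dvd hψ hg h)

theorem charMod_mul_mul {h : Fq[X]} (hh : h ≠ 0) (g p : Fq[X]) :
    charMod ψ (h * g) (h * p) = charMod ψ g p := by
  rw [charMod_apply, charMod_apply, map_mul, map_mul, mul_div_mul_left _ _ (OtoK_ne_zero hh)]

end CharMod

theorem exists_charMod_ne_one {ψ : AddChar (LaurentSeries Fq) ℂ}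
    (hψ_small : ∀ x, Kabs x ≤ (Fintype.card Fq : ℝ) ^ (-2 : ℤ) → ψ x = 1)
    (hψ_ne : ∃ x, Kabs x ≤ (Fintype.card Fq : ℝ) ^ (-1 : ℤ) ∧ ψ x ≠ 1)
    {ϖ : Fq[X]} (hϖ : ϖ.Monic) (hd : ϖ.natDegree ≠ 0) : ∃ w, charMod ψ ϖ w ≠ 1 := by
  obtain ⟨c, hc⟩ := exists_single_one_ne_one hψ_small hψ_ne
  refine ⟨C c * X ^ (ϖ.natDegree - 1), ?_⟩
  rwa [charMod_apply, ψ.map_eq_of_map_sub_eq_one (hψ_small _ (Kabs_OtoK_div_sub_single_le hϖ hd c))]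

theorem sum_residues_addChar_eq_zero (χ : AddChar Fq[X] ℂ) {g : Fq[X]} (hg : g.Monic)
    (hχ : ∀ p, g ∣ p → χ p = 1) {w : Fq[X]} (hw : χ w ≠ 1) : ∑ z ∈ residues g, χ z = 0 := by
  have hshift : ∑ z ∈ residues g, χ z = χ w * ∑ z ∈ residues g, χ z := by
    rw [Finset.mul_sum, ← sum_residues_add_right hg
      (fun p p' h ↦ χ.map_eq_of_map_sub_eq_one (hχ _ h)) w]
    simp only [χ.map_add_eq_mul, mul_comm]
  have : (χ w - 1) * ∑ z ∈ residues g, χ z = 0 := by linear_combination -hshift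
  exact (mul_eq_zero.1 this).resolve_left (sub_ne_zero.2 hw)

theorem sum_residues_charMod_mul {ψ : AddChar (LaurentSeries Fq) ℂ} (hψ : ∀ p, ψ (OtoK p) = 1)
    {ϖ : Fq[X]} (hϖ : ϖ.Monic) (hirr : Irreducible ϖ) (hχ : ∃ w, charMod ψ ϖ w ≠ 1)
    (j : ℕ) (p : Fq[X]) :
    ∑ z ∈ residues (ϖ ^ j), charMod ψ (ϖ ^ j) (p * z) =
      if ϖ ^ j ∣ p then (Fintype.card Fq : ℂ) ^ (ϖ ^ j).natDegree else 0 := by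
  have hϖj : (ϖ ^ j).Monic := hϖ.pow j
  split_ifs with hp
  · rw [Finset.sum_congr rfl fun z _ ↦
      charMod_eq_one_of_dvd hψ hϖj.ne_zero (dvd_mul_of_dvd_left hp z), Finset.sum_const,
      card_residues, nsmul_eq_mul, mul_one, Nat.cast_pow]
  obtain _ | j := j
  · simp at hp
  obtain ⟨z, hz⟩ := exists_mul_sub_pow_dvd hirr hp
  obtain ⟨w, hw⟩ := hχ
  simp only [← AddChar.mulShift_apply (ψ := charMod ψ (ϖ ^ (j + 1))) (r := p)]
  refine sum_residues_addChar_eq_zero _ hϖj (w := z * w) (fun y hy ↦ ?_) ?_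
  · rw [AddChar.mulShift_apply]
    exact charMod_eq_one_of_dvd hψ hϖj.ne_zero (dvd_mul_of_dvd_right hy p)
  · have hzw : ϖ ^ (j + 1) ∣ p * (z * w) - ϖ ^ j * w := by
      rw [← mul_assoc, ← sub_mul]
      exact dvd_mul_of_dvd_left hz w
    rwa [AddChar.mulShift_apply, charMod_congr hψ hϖj.ne_zero hzw, pow_succ,
      charMod_mul_mul (pow_ne_zero j hϖ.ne_zero)]

theorem sum_piFinset_residues_charMod_dotProduct {ψ : AddChar (LaurentSeries Fq) ℂ}
    (hψ : ∀ p, ψ (OtoK p) = 1) {ϖ : Fq[X]} (hϖ : ϖ.Monic) (hirr : Irreducible ϖ)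
    (hχ : ∃ w, charMod ψ ϖ w ≠ 1) {ι : Type*} [Fintype ι] [DecidableEq ι] (j : ℕ) (c : ι → Fq[X]) :
    ∑ y ∈ Fintype.piFinset fun _ ↦ residues (ϖ ^ j), charMod ψ (ϖ ^ j) (c ⬝ᵥ y) =
      if ∀ i, ϖ ^ j ∣ c i then ((Fintype.card Fq : ℂ) ^ (ϖ ^ j).natDegree) ^ Fintype.card ι
      else 0 := by
  simp only [dotProduct, AddChar.map_finsetSum]
  rw [← Finset.prod_univ_sum (fun _ ↦ residues (ϖ ^ j)) fun i z ↦ charMod ψ (ϖ ^ j) (c i * z)]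
  simp only [sum_residues_charMod_mul hψ hϖ hirr hχ, Finset.prod_ite_zero, Finset.mem_univ,
    true_implies, Finset.prod_const, Finset.card_univ]

section CriticalPoint

omit [Fintype Fq]

variable {ι : Type*} [Fintype ι] [DecidableEq ι] {M : Matrix ι ι Fq[X]} {g a s : Fq[X]}
  (v : ι → Fq[X])

theorem dvd_gradient_smul_adjugate (he : g ∣ 4 * M.det * a * s + 1) (i : ι) :
    g ∣ ((2 * a) • M *ᵥ ((-2 * s) • M.adjugate *ᵥ v) - v) i := by
  rw [gradient_smul_adjugate]
  exact dvd_mul_of_dvd_left (dvd_neg.2 he) _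

/-- The solution of `2aMx ≡ v (mod g)` when `4 a (det M) s ≡ -1 (mod g)`, reduced modulo `g`. -/
def criticalResidue (g s : Fq[X]) (M : Matrix ι ι Fq[X]) : ι → Fq[X] :=
  fun i ↦ ((-2 * s) • M.adjugate *ᵥ v) i %ₘ g

theorem criticalResidue_eq_add_smul :
    criticalResidue v g s M =
      (-2 * s) • M.adjugate *ᵥ v + g • fun i ↦ -(((-2 * s) • M.adjugate *ᵥ v) i /ₘ g) := by
  ext1 i
  have h := modByMonic_add_div (((-2 * s) • M.adjugate *ᵥ v) i) g
  simp only [criticalResidue, Pi.add_apply, Pi.smul_apply, smul_eq_mul] at h ⊢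
  linear_combination h

theorem dvd_gradient_criticalResidue (he : g ∣ 4 * M.det * a * s + 1) (i : ι) :
    g ∣ ((2 * a) • M *ᵥ criticalResidue v g s M - v) i := by
  rw [criticalResidue_eq_add_smul, gradient_add_smul]
  exact dvd_add (dvd_gradient_smul_adjugate v he i) (dvd_mul_right _ _)

theorem dvd_quadratic_criticalResidue_sub (hM : M.IsSymm) (hs : g * g ∣ 4 * M.det * a * s + 1) :
    g * g ∣ (a * (criticalResidue v g s M ⬝ᵥ M *ᵥ criticalResidue v g s M) -
      v ⬝ᵥ criticalResidue v g s M) - (v ⬝ᵥ M.adjugate *ᵥ v) * s := by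
  set δ : ι → Fq[X] := fun i ↦ -(((-2 * s) • M.adjugate *ᵥ v) i /ₘ g)
  obtain ⟨t, ht⟩ : g ∣ ((2 * a) • M *ᵥ ((-2 * s) • M.adjugate *ᵥ v) - v) ⬝ᵥ δ :=
    Finset.dvd_sum fun i _ ↦ dvd_mul_of_dvd_left
      (dvd_gradient_smul_adjugate v (dvd_of_mul_right_dvd hs) i) _
  obtain ⟨u, hu⟩ := hs
  rw [criticalResidue_eq_add_smul, quadratic_add_smul hM, quadratic_smul_adjugate, ht]
  exact ⟨u * (s * (v ⬝ᵥ M.adjugate *ᵥ v)) + t + a * (δ ⬝ᵥ M *ᵥ δ),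
    by linear_combination (s * (v ⬝ᵥ M.adjugate *ᵥ v)) * hu⟩

end CriticalPoint

theorem eq_criticalResidue {ι : Type*} [Fintype ι] [DecidableEq ι] {M : Matrix ι ι Fq[X]}
    {g a s : Fq[X]} (v : ι → Fq[X]) (hg : g.Monic) (he : g ∣ 4 * M.det * a * s + 1) {x : ι → Fq[X]}
    (hx : x ∈ Fintype.piFinset fun _ ↦ residues g) (hgrad : ∀ i, g ∣ ((2 * a) • M *ᵥ x - v) i) :
    x = criticalResidue v g s M := by
  ext1 i
  refine eq_of_mem_residues_of_dvd_sub hg (Fintype.mem_piFinset.1 hx i)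
    (modByMonic_mem_residues hg _) ?_
  have hxy : g ∣ x i - ((-2 * s) • M.adjugate *ᵥ v) i := by
    rw [← Pi.sub_apply, sub_smul_adjugate_eq M a s]
    exact dvd_add (dvd_mul_of_dvd_right (dvd_mulVec_apply _ hgrad i) _)
      (dvd_mul_of_dvd_left he _)
  simpa [criticalResidue] using hxy.sub (dvd_modByMonic_sub (((-2 * s) • M.adjugate *ᵥ v) i))

theorem sum_piFinset_residues_charMod_quadratic {ψ : AddChar (LaurentSeries Fq) ℂ}
    (hψ : ∀ p, ψ (OtoK p) = 1) {ϖ : Fq[X]} (hϖ : ϖ.Monic) (hirr : Irreducible ϖ)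
    (hχ : ∃ w, charMod ψ ϖ w ≠ 1) {ι : Type*} [Fintype ι] [DecidableEq ι]
    {M : Matrix ι ι Fq[X]} (hM : M.IsSymm) (v : ι → Fq[X]) {m : ℕ} {a s : Fq[X]}
    (hs : ϖ ^ (m + m) ∣ 4 * M.det * a * s + 1) :
    ∑ x ∈ Fintype.piFinset fun _ ↦ residues (ϖ ^ (m + m)),
        charMod ψ (ϖ ^ (m + m)) (a * (x ⬝ᵥ M *ᵥ x) - v ⬝ᵥ x) =
      ((Fintype.card Fq : ℂ) ^ (ϖ ^ m).natDegree) ^ Fintype.card ι *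
        charMod ψ (ϖ ^ (m + m)) ((v ⬝ᵥ M.adjugate *ᵥ v) * s) := by
  have horth := sum_piFinset_residues_charMod_dotProduct hψ hϖ hirr hχ (ι := ι) m
  have hg : (ϖ ^ m).Monic := hϖ.pow m
  rw [pow_add] at hs ⊢
  generalize ϖ ^ m = g at horth hg hs ⊢
  have hgg : g * g ≠ 0 := (hg.mul hg).ne_zero
  have he : g ∣ 4 * M.det * a * s + 1 := dvd_of_mul_right_dvd hs
  have hfiber (x : ι → Fq[X]) :
      ∑ y ∈ Fintype.piFinset fun _ ↦ residues g,
          charMod ψ (g * g) (a * ((x + g • y) ⬝ᵥ M *ᵥ (x + g • y)) - v ⬝ᵥ (x + g • y)) =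
        charMod ψ (g * g) (a * (x ⬝ᵥ M *ᵥ x) - v ⬝ᵥ x) *
          if ∀ i, g ∣ ((2 * a) • M *ᵥ x - v) i then
            ((Fintype.card Fq : ℂ) ^ g.natDegree) ^ Fintype.card ι else 0 := by
    have hterm (y : ι → Fq[X]) :
        charMod ψ (g * g) (a * ((x + g • y) ⬝ᵥ M *ᵥ (x + g • y)) - v ⬝ᵥ (x + g • y)) =
          charMod ψ (g * g) (a * (x ⬝ᵥ M *ᵥ x) - v ⬝ᵥ x) *
            charMod ψ g (((2 * a) • M *ᵥ x - v) ⬝ᵥ y) := by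
      rw [quadratic_add_smul hM, AddChar.map_add_eq_mul, AddChar.map_add_eq_mul,
        charMod_mul_mul hg.ne_zero, charMod_eq_one_of_dvd hψ hgg (dvd_mul_right _ _), mul_one]
    rw [Finset.sum_congr rfl fun y _ ↦ hterm y, ← Finset.mul_sum, horth]
  rw [sum_piFinset_residues_mul hg hg, Finset.sum_congr rfl fun x _ ↦ hfiber x,
    Finset.sum_eq_single_of_mem (criticalResidue v g s M)
      (Fintype.mem_piFinset.2 fun i ↦ modByMonic_mem_residues hg _)
      fun x hx hne ↦ by rw [if_neg fun h ↦ hne (eq_criticalResidue v hg he hx h), mul_zero],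
    if_pos (dvd_gradient_criticalResidue v he),
    charMod_congr hψ hgg (dvd_quadratic_criticalResidue_sub v hM hs), mul_comm]

section NegInvMod

omit [Fintype Fq]

def negInvMod (g c b : Fq[X]) : Fq[X] :=
  -invMod g (c * b) %ₘ g

variable {g c b : Fq[X]}

theorem dvd_mul_negInvMod_add_one (h : IsCoprime (c * b) g) : g ∣ c * b * negInvMod g c b + 1 := by
  obtain ⟨t, ht⟩ := dvd_modByMonic_sub (g := g) (-invMod g (c * b))
  obtain ⟨u, hu⟩ := dvd_mul_invMod_sub_one h
  exact ⟨c * b * t - u, by rw [negInvMod]; linear_combination (c * b) * ht - hu⟩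

theorem isCoprime_negInvMod (h : IsCoprime (c * b) g) : IsCoprime (negInvMod g c b) g := by
  obtain ⟨t, ht⟩ := dvd_mul_negInvMod_add_one h
  exact ⟨-(c * b), t, by linear_combination -ht⟩

end NegInvMod

theorem negInvMod_negInvMod {g c b : Fq[X]} (hg : g.Monic) (hc : IsCoprime c g)
    (hb : IsCoprime b g) (hbg : b ∈ residues g) : negInvMod g c (negInvMod g c b) = b := by
  have h₁ := dvd_mul_negInvMod_add_one (hc.mul_left hb)
  have h₂ := dvd_mul_negInvMod_add_one (hc.mul_left (isCoprime_negInvMod (hc.mul_left hb)))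
  refine eq_of_mem_residues_of_dvd_sub hg (modByMonic_mem_residues hg _) hbg ?_
  convert (h₁.mul_left (negInvMod g c (negInvMod g c b))).sub (h₂.mul_left b) using 1
  ring

theorem sum_units_residues_negInvMod {M : Type*} [AddCommMonoid M] {g c : Fq[X]} (hg : g.Monic)
    (hc : IsCoprime c g) (f : Fq[X] → M) :
    ∑ b ∈ (residues g).filter (IsCoprime · g), f (negInvMod g c b) =
      ∑ b ∈ (residues g).filter (IsCoprime · g), f b := by
  have hmaps : ∀ b ∈ (residues g).filter (IsCoprime · g),
      negInvMod g c b ∈ (residues g).filter (IsCoprime · g) := fun b hb ↦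
    Finset.mem_filter.2 ⟨modByMonic_mem_residues hg _,
      isCoprime_negInvMod (hc.mul_left (Finset.mem_filter.1 hb).2)⟩
  have hinv : ∀ b ∈ (residues g).filter (IsCoprime · g), negInvMod g c (negInvMod g c b) = b :=
    fun b hb ↦ negInvMod_negInvMod hg hc (Finset.mem_filter.1 hb).2 (Finset.mem_filter.1 hb).1
  exact Finset.sum_nbij' _ _ hmaps hmaps hinv hinv fun _ _ ↦ rfl

theorem sum_units_residues_charMod_mul {ψ : AddChar (LaurentSeries Fq) ℂ}
    (hψ : ∀ p, ψ (OtoK p) = 1) {ϖ : Fq[X]} (hϖ : ϖ.Monic) (hirr : Irreducible ϖ)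
    (hχ : ∃ w, charMod ψ ϖ w ≠ 1) {k : ℕ} (hk : 0 < k) (P : Fq[X]) :
    ∑ b ∈ (residues (ϖ ^ k)).filter (IsCoprime · (ϖ ^ k)), charMod ψ (ϖ ^ k) (P * b) =
      (if ϖ ^ k ∣ P then (Fintype.card Fq : ℂ) ^ (ϖ ^ k).natDegree else 0) -
        if ϖ ^ (k - 1) ∣ P then (Fintype.card Fq : ℂ) ^ (ϖ ^ (k - 1)).natDegree else 0 := by
  obtain ⟨j, rfl⟩ := Nat.exists_eq_add_of_lt hk
  rw [zero_add, Nat.add_sub_cancel, ← sum_residues_charMod_mul hψ hϖ hirr hχ,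
    ← sum_residues_charMod_mul hψ hϖ hirr hχ, eq_sub_iff_add_eq,
    ← Finset.sum_filter_add_sum_filter_not (residues (ϖ ^ (j + 1))) (IsCoprime · (ϖ ^ (j + 1))),
    add_right_inj]
  have hfilter : (residues (ϖ ^ (j + 1))).filter (fun b ↦ ¬IsCoprime b (ϖ ^ (j + 1))) =
      (residues (ϖ * ϖ ^ j)).filter (ϖ ∣ ·) := by
    rw [← pow_succ']
    refine Finset.filter_congr fun b _ ↦ ?_
    rw [IsCoprime.pow_right_iff j.succ_pos, isCoprime_comm, hirr.coprime_iff_not_dvd, not_not]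
  rw [hfilter, sum_filter_dvd_residues_mul hϖ (hϖ.pow j)]
  refine Finset.sum_congr rfl fun y _ ↦ ?_
  rw [pow_succ', mul_left_comm, charMod_mul_mul hϖ.ne_zero]

theorem Oabs_of_ne_zero {p : Fq[X]} (hp : p ≠ 0) : Oabs p = (Fintype.card Fq : ℝ) ^ p.natDegree :=
  if_neg hp

theorem Oabs_pow {p : Fq[X]} (hp : p ≠ 0) (k : ℕ) :
    Oabs p ^ k = (Fintype.card Fq : ℝ) ^ (p ^ k).natDegree := by
  rw [Oabs_of_ne_zero hp, ← pow_mul, natDegree_pow, mul_comm]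

theorem Oabs_lt_Oabs_pow_iff {ϖ : Fq[X]} (hϖ : ϖ ≠ 0) (k : ℕ) {p : Fq[X]} :
    Oabs p < Oabs ϖ ^ k ↔ p ∈ residues (ϖ ^ k) := by
  rw [Oabs_pow hϖ, mem_residues]
  rcases eq_or_ne p 0 with rfl | hp
  · simp only [Oabs, if_true, degree_zero]
    exact iff_of_true (by positivity) (WithBot.bot_lt_coe _)
  · rw [Oabs_of_ne_zero hp, pow_lt_pow_iff_right₀ one_lt_cast_card, degree_eq_natDegree hp,
      Nat.cast_lt]

theorem setOf_Oabs_lt_pow_and_isCoprime {ϖ : Fq[X]} (hϖ : ϖ ≠ 0) {k : ℕ} (hk : 0 < k) :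
    {a : Fq[X] | Oabs a < Oabs ϖ ^ k ∧ IsCoprime a ϖ} =
      ↑((residues (ϖ ^ k)).filter (IsCoprime · (ϖ ^ k))) := by
  ext a
  simp [Oabs_lt_Oabs_pow_iff hϖ, IsCoprime.pow_right_iff hk]

theorem setOf_forall_Oabs_lt_pow {ι : Type*} [Fintype ι] [DecidableEq ι] {ϖ : Fq[X]}
    (hϖ : ϖ ≠ 0) (k : ℕ) :
    {x : ι → Fq[X] | ∀ i, Oabs (x i) < Oabs ϖ ^ k} =
      ↑(Fintype.piFinset fun _ : ι ↦ residues (ϖ ^ k)) := by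
  ext x
  simp [Oabs_lt_Oabs_pow_iff hϖ]

theorem Oabs_rpow_mul_div_two {ϖ : Fq[X]} (hϖ : ϖ ≠ 0) (n m : ℕ) :
    Oabs ϖ ^ ((n : ℝ) * ((m + m : ℕ) : ℝ) / 2) =
      ((Fintype.card Fq : ℝ) ^ (ϖ ^ m).natDegree) ^ n := by
  rw [show (n : ℝ) * ((m + m : ℕ) : ℝ) / 2 = ((m * n : ℕ) : ℝ) by push_cast; ring,
    Real.rpow_natCast, pow_mul, Oabs_pow hϖ]

theorem isCoprime_four_mul {ϖ d : Fq[X]} (hodd : Odd (Fintype.card Fq)) (hirr : Irreducible ϖ)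
    (hd : ¬ϖ ∣ d) : IsCoprime (4 * d) ϖ := by
  have h2 : (2 : Fq) ≠ 0 := Ring.two_ne_zero fun h ↦ by
    rw [FiniteField.even_card_iff_char_two, ← Nat.even_iff] at h
    exact Nat.not_even_iff_odd.2 hodd h
  have h4 : IsUnit (4 : Fq[X]) := by
    rw [← map_ofNat C 4, isUnit_C, show (4 : Fq) = 2 * 2 by norm_num]
    exact (mul_ne_zero h2 h2).isUnit
  exact (isCoprime_mul_unit_left_left h4 d ϖ).2 (hirr.coprime_iff_not_dvd.2 hd).symm

theorem stmt_3_general (Fq : Type) [Field Fq] [Fintype Fq] (hodd : Odd (Fintype.card Fq))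
    (n : ℕ)
    (M : Matrix (Fin n) (Fin n) Fq[X]) (hM : M.IsSymm)
    (ϖ : Fq[X]) (hmon : ϖ.Monic) (hirr : Irreducible ϖ) (hϖdet : ¬ ϖ ∣ M.det)
    (k : ℕ) (hk : 1 ≤ k) (hkeven : Even k) (v : Fin n → Fq[X])
    (ψ : LaurentSeries Fq → ℂ)
    (hψ2 : ∀ x y, ψ (x + y) = ψ x * ψ y)
    (hψ3 : ∀ p : Fq[X], ψ (OtoK p) = 1)
    (hψ4 : ∀ x, Kabs x ≤ (Fintype.card Fq : ℝ) ^ (-2 : ℤ) → ψ x = 1)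
    (hψ5 : ∃ x, Kabs x ≤ (Fintype.card Fq : ℝ) ^ (-1 : ℤ) ∧ ψ x ≠ 1) :
    (∑ᶠ a ∈ {a : Fq[X] | Oabs a < Oabs ϖ ^ k ∧ IsCoprime a ϖ},
      ∑ᶠ x ∈ {x : Fin n → Fq[X] | ∀ i, Oabs (x i) < Oabs ϖ ^ k},
        ψ (OtoK (a * (x ⬝ᵥ M.mulVec x) - v ⬝ᵥ x) / OtoK ϖ ^ k))
    = (↑(Oabs ϖ ^ (((n : ℝ) * (k : ℝ)) / 2)) : ℂ) *
        ((↑(Oabs ϖ ^ k) : ℂ) *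
            (if ϖ ^ k ∣ v ⬝ᵥ M.adjugate.mulVec v then 1 else 0) -
          (↑(Oabs ϖ ^ (k - 1)) : ℂ) *
            (if ϖ ^ (k - 1) ∣ v ⬝ᵥ M.adjugate.mulVec v then 1 else 0)) := by
  let χ : AddChar (LaurentSeries Fq) ℂ := ⟨ψ, by simpa using hψ3 0, hψ2⟩
  have hχ : ∃ w, charMod χ ϖ w ≠ 1 := exists_charMod_ne_one hψ4 hψ5 hmon hirr.natDegree_pos.ne'
  have hψχ (g p : Fq[X]) : ψ (OtoK p / OtoK g) = charMod χ g p := (charMod_apply (ψ := χ) g p).symm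
  obtain ⟨m, rfl⟩ := hkeven
  have hc : IsCoprime (4 * M.det) (ϖ ^ (m + m)) := (isCoprime_four_mul hodd hirr hϖdet).pow_right
  simp_rw [← map_pow, hψχ, setOf_Oabs_lt_pow_and_isCoprime hmon.ne_zero (by omega : 0 < m + m),
    setOf_forall_Oabs_lt_pow hmon.ne_zero, finsum_mem_coe_finset]
  rw [Finset.sum_congr rfl fun a ha ↦ sum_piFinset_residues_charMod_quadratic hψ3 hmon hirr hχ hM v
      (dvd_mul_negInvMod_add_one (hc.mul_left (Finset.mem_filter.1 ha).2)),
    ← Finset.mul_sum, Fintype.card_fin,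
    sum_units_residues_negInvMod (hmon.pow _) hc fun b ↦ charMod χ (ϖ ^ (m + m)) (_ * b),
    sum_units_residues_charMod_mul hψ3 hmon hirr hχ (by omega), Oabs_rpow_mul_div_two hmon.ne_zero,
    Oabs_pow hmon.ne_zero, Oabs_pow hmon.ne_zero]
  push_cast
  split_ifs <;> ring

/-- Exact evaluation of the complete quadratic exponential sum modulo `ϖ^k` for even `k`
and `ϖ ∤ det M`: with `F(x) = xᵀMx` and `F*(w) = wᵀ·adj(M)·w`,
`S_{ϖ^k}(v) = |ϖ|^{nk/2}(|ϖ|^k·δ_{ϖ^k ∣ F*(v)} − |ϖ|^{k−1}·δ_{ϖ^{k−1} ∣ F*(v)})`. -/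
theorem stmt_3 (Fq : Type) [Field Fq] [Fintype Fq] (hodd : Odd (Fintype.card Fq))
    (n : ℕ) (hn : 1 ≤ n)
    (M : Matrix (Fin n) (Fin n) Fq[X]) (hM : M.IsSymm) (hdet : M.det ≠ 0)
    (ϖ : Fq[X]) (hmon : ϖ.Monic) (hirr : Irreducible ϖ) (hϖdet : ¬ ϖ ∣ M.det)
    (k : ℕ) (hk : 1 ≤ k) (hkeven : Even k) (v : Fin n → Fq[X])
    (ψ : LaurentSeries Fq → ℂ)
    (hψ1 : ∀ x, ‖ψ x‖ = 1)
    (hψ2 : ∀ x y, ψ (x + y) = ψ x * ψ y)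
    (hψ3 : ∀ p : Fq[X], ψ (OtoK p) = 1)
    (hψ4 : ∀ x, Kabs x ≤ (Fintype.card Fq : ℝ) ^ (-2 : ℤ) → ψ x = 1)
    (hψ5 : ∃ x, Kabs x ≤ (Fintype.card Fq : ℝ) ^ (-1 : ℤ) ∧ ψ x ≠ 1) :
    (∑ᶠ a ∈ {a : Fq[X] | Oabs a < Oabs ϖ ^ k ∧ IsCoprime a ϖ},
      ∑ᶠ x ∈ {x : Fin n → Fq[X] | ∀ i, Oabs (x i) < Oabs ϖ ^ k},
        ψ (OtoK (a * (x ⬝ᵥ M.mulVec x) - v ⬝ᵥ x) / OtoK ϖ ^ k))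
    = (↑(Oabs ϖ ^ (((n : ℝ) * (k : ℝ)) / 2)) : ℂ) *
        ((↑(Oabs ϖ ^ k) : ℂ) *
            (if ϖ ^ k ∣ v ⬝ᵥ M.adjugate.mulVec v then 1 else 0) -
          (↑(Oabs ϖ ^ (k - 1)) : ℂ) *
            (if ϖ ^ (k - 1) ∣ v ⬝ᵥ M.adjugate.mulVec v then 1 else 0)) :=
  stmt_3_general Fq hodd n M hM ϖ hmon hirr hϖdet k hk hkeven v ψ hψ2 hψ3 hψ4 hψ5
end
end

section
/- Let a, r ∈ O with r monic of degree M and gcd(a,r) = 1. Then there exist a1, r1 ∈ O with r1 of degree M+1, gcd(a1,r1) = 1, and |a/r − a1/r1| = q^{−2M−1} = (|r|·|r1|)^{−1}, where a/r − a1/r1 is computed in the fraction field F_q(t) (equivalently, a·r1 − a1·r is a nonzero constant). -/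
/-
Take a Bezout relation `u a + v r = 1` with `deg u < deg r`, possible since `r` is monic.
Then `r₁ = u + t r` has degree `M + 1`, and with `a₁ = a t - v` one gets
`a r₁ - a₁ r = u a + v r = 1`.
-/

set_option autoImplicit false

noncomputable section

open Polynomial Matrix
open scoped Classical

variable {Fq : Type} [Field Fq] [Fintype Fq]

section

variable {R : Type*} [CommRing R] [Nontrivial R]

theorem Polynomial.exists_mul_add_mul_eq_one_degree_lt {a r : R[X]} (hr : r.Monic)
    (h : IsCoprime a r) :
    ∃ u v : R[X], u * a + v * r = 1 ∧ u.degree < r.degree := by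
  obtain ⟨u, v, huv⟩ := h
  refine ⟨u %ₘ r, v + a * (u /ₘ r), ?_, degree_modByMonic_lt u hr⟩
  linear_combination huv + a * modByMonic_add_div u r

theorem Polynomial.natDegree_add_X_mul_of_degree_lt {u r : R[X]} (h : u.degree < r.degree) :
    (u + X * r).natDegree = r.natDegree + 1 := by
  have hr : r ≠ 0 := ne_zero_of_degree_gt h
  have hlt : u.degree < (X * r).degree :=
    h.trans (mul_comm r X ▸ degree_lt_degree_mul_X hr)
  rw [natDegree_add_eq_right_of_degree_lt hlt, natDegree_X_mul hr]

end

theorem stmt_10_general (Fq : Type) [Field Fq]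
    (a r : Fq[X]) (M : ℕ) (hr : r.Monic) (hdeg : r.natDegree = M)
    (hco : IsCoprime a r) :
    ∃ a1 r1 : Fq[X], r1 ≠ 0 ∧ r1.natDegree = M + 1 ∧ IsCoprime a1 r1 ∧
      (a * r1 - a1 * r).degree = 0 := by
  obtain ⟨u, v, huv, hu⟩ := exists_mul_add_mul_eq_one_degree_lt hr hco
  have hr1 : (u + X * r).natDegree = M + 1 := hdeg ▸ natDegree_add_X_mul_of_degree_lt hu
  have hdet : a * (u + X * r) - (a * X - v) * r = 1 := by linear_combination huv
  exact ⟨a * X - v, u + X * r, ne_zero_of_natDegree_gt (n := 0) (by omega), hr1,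
    ⟨-r, a, by linear_combination hdet⟩, by simp [hdet]⟩

/-- Refined one-dimensional Dirichlet approximation: given `a/r` in lowest terms with
`r` monic of degree `M`, there is `a₁/r₁` with `deg r₁ = M + 1`, `gcd(a₁,r₁) = 1`, and
`|a/r − a₁/r₁| = q^{−2M−1} = (|r||r₁|)^{−1}`; equivalently, `a·r₁ − a₁·r` is a nonzero
constant, i.e. has degree `0`. -/
theorem stmt_10 (Fq : Type) [Field Fq] [Fintype Fq]
    (a r : Fq[X]) (M : ℕ) (hr : r.Monic) (hdeg : r.natDegree = M)
    (hco : IsCoprime a r) :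
    ∃ a1 r1 : Fq[X], r1 ≠ 0 ∧ r1.natDegree = M + 1 ∧ IsCoprime a1 r1 ∧
      (a * r1 - a1 * r).degree = 0 :=
  stmt_10_general Fq a r M hr hdeg hco
end
end

section
/- Let c1, c2, r ∈ O with r monic and gcd(c1,c2,r) = 1. Then for every a = (a1,a2) ∈ O², the following are equivalent: (i) gcd(a1,a2,r) = 1 and r ∣ c1·a1 + c2·a2; (ii) there exists b ∈ O with gcd(b,r) = 1 such that r ∣ a1 + b·c2 and r ∣ a2 − b·c1 (i.e., a ≡ b·(−c2, c1) mod r). -/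
set_option autoImplicit false

noncomputable section

open Polynomial Matrix
open scoped Classical

variable {Fq : Type} [Field Fq] [Fintype Fq]

/-!
Write `gcd(c₁, c₂, r) = 1` as a Bézout relation `u c₁ + v c₂ + w r = 1`. If
`r ∣ c₁ a₁ + c₂ a₂`, then `b = u a₂ - v a₁` satisfies `a ≡ b (-c₂, c₁) (mod r)`, and any common
divisor of `b` and `r` then divides `a₁`, `a₂` and `r`. Conversely `c₁ a₁ + c₂ a₂` is a combination
of `a₁ + b c₂` and `a₂ - b c₁`, and a common divisor of `a₁`, `a₂`, `r` is prime to `b`, so it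
divides `c₁` and `c₂`.
-/

section

variable {R : Type*} [CommRing R] {c1 c2 r a1 a2 b : R}

theorem IsBezout.exists_mul_add_mul_add_mul_eq_one [IsBezout R] {x y z : R}
    (h : ∀ p : R, p ∣ x → p ∣ y → p ∣ z → IsUnit p) : ∃ u v w : R, u * x + v * y + w * z = 1 := by
  obtain ⟨s, t, hst⟩ : IsCoprime x (IsBezout.gcd y z) :=
    IsRelPrime.isCoprime fun p hpx hpg =>
      h p hpx (hpg.trans (IsBezout.gcd_dvd_left y z)) (hpg.trans (IsBezout.gcd_dvd_right y z))
  obtain ⟨a, b, hab⟩ := IsBezout.gcd_eq_sum y z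
  exact ⟨s, t * a, t * b, by linear_combination hst + t * hab⟩

theorem dvd_add_mul_and_dvd_sub_mul_of_mul_add_mul_add_mul_eq_one {u v w : R}
    (huvw : u * c1 + v * c2 + w * r = 1) (hr : r ∣ c1 * a1 + c2 * a2) :
    r ∣ a1 + (u * a2 - v * a1) * c2 ∧ r ∣ a2 - (u * a2 - v * a1) * c1 := by
  obtain ⟨k, hk⟩ := hr
  exact ⟨⟨u * k + w * a1, by linear_combination u * hk - a1 * huvw⟩,
    ⟨v * k + w * a2, by linear_combination v * hk - a2 * huvw⟩⟩

theorem dvd_and_dvd_of_dvd_add_mul_of_dvd_sub_mul {p : R} (h1 : r ∣ a1 + b * c2)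
    (h2 : r ∣ a2 - b * c1) (hpr : p ∣ r) (hpb : p ∣ b) : p ∣ a1 ∧ p ∣ a2 :=
  ⟨(dvd_add_left (hpb.mul_right c2)).mp (hpr.trans h1),
    (dvd_sub_left (hpb.mul_right c1)).mp (hpr.trans h2)⟩

theorem dvd_and_dvd_of_isCoprime_of_dvd_add_mul_of_dvd_sub_mul {p : R} (hb : IsCoprime b r)
    (h1 : r ∣ a1 + b * c2) (h2 : r ∣ a2 - b * c1) (hpr : p ∣ r) (hp1 : p ∣ a1) (hp2 : p ∣ a2) :
    p ∣ c1 ∧ p ∣ c2 := by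
  have hpb : IsCoprime p b := (hb.of_isCoprime_of_dvd_right hpr).symm
  exact ⟨hpb.dvd_of_dvd_mul_left ((dvd_sub_right hp2).mp (hpr.trans h2)),
    hpb.dvd_of_dvd_mul_left ((dvd_add_right hp1).mp (hpr.trans h1))⟩

theorem dvd_mul_add_mul_of_dvd_add_mul_of_dvd_sub_mul (h1 : r ∣ a1 + b * c2)
    (h2 : r ∣ a2 - b * c1) : r ∣ c1 * a1 + c2 * a2 := by
  convert h1.linear_comb h2 c1 c2 using 1
  ring

theorem exists_isCoprime_dvd_add_mul_dvd_sub_mul [IsBezout R]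
    (hc : ∀ p : R, p ∣ c1 → p ∣ c2 → p ∣ r → IsUnit p)
    (ha : ∀ p : R, p ∣ a1 → p ∣ a2 → p ∣ r → IsUnit p) (hr : r ∣ c1 * a1 + c2 * a2) :
    ∃ b : R, IsCoprime b r ∧ r ∣ a1 + b * c2 ∧ r ∣ a2 - b * c1 := by
  obtain ⟨u, v, w, huvw⟩ := IsBezout.exists_mul_add_mul_add_mul_eq_one hc
  obtain ⟨h1, h2⟩ := dvd_add_mul_and_dvd_sub_mul_of_mul_add_mul_add_mul_eq_one huvw hr
  refine ⟨_, IsRelPrime.isCoprime fun p hpb hpr => ?_, h1, h2⟩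
  obtain ⟨hp1, hp2⟩ := dvd_and_dvd_of_dvd_add_mul_of_dvd_sub_mul h1 h2 hpr hpb
  exact ha p hp1 hp2 hpr

end

theorem stmt_11_general (Fq : Type) [Field Fq]
    (c1 c2 r : Fq[X]) (h : CoprimeTriple c1 c2 r)
    (a1 a2 : Fq[X]) :
    (CoprimeTriple a1 a2 r ∧ r ∣ c1 * a1 + c2 * a2) ↔
      (∃ b : Fq[X], IsCoprime b r ∧ r ∣ a1 + b * c2 ∧ r ∣ a2 - b * c1) := by
  constructor
  · rintro ⟨ha, hr⟩
    exact exists_isCoprime_dvd_add_mul_dvd_sub_mul h ha hr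
  · rintro ⟨b, hb, h1, h2⟩
    refine ⟨fun p hp1 hp2 hpr => ?_, dvd_mul_add_mul_of_dvd_add_mul_of_dvd_sub_mul h1 h2⟩
    obtain ⟨hpc1, hpc2⟩ :=
      dvd_and_dvd_of_isCoprime_of_dvd_add_mul_of_dvd_sub_mul hb h1 h2 hpr hp1 hp2
    exact h p hpc1 hpc2 hpr

/-- The residues `a mod r` with `gcd(a₁,a₂,r) = 1` lying on `c₁a₁ + c₂a₂ ≡ 0 (mod r)`
are exactly the multiples `b·(−c₂, c₁) mod r` for `b` coprime to `r`. -/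
theorem stmt_11 (Fq : Type) [Field Fq] [Fintype Fq]
    (c1 c2 r : Fq[X]) (hr : r.Monic) (h : CoprimeTriple c1 c2 r)
    (a1 a2 : Fq[X]) :
    (CoprimeTriple a1 a2 r ∧ r ∣ c1 * a1 + c2 * a2) ↔
      (∃ b : Fq[X], IsCoprime b r ∧ r ∣ a1 + b * c2 ∧ r ∣ a2 - b * c1) :=
  stmt_11_general Fq c1 c2 r h a1 a2
end
end

section
/- Let c = (c1,c2) ∈ O² be primitive, let r ∈ O be monic, and let a = (a1,a2) ∈ O² with |a| < |r|, gcd(a1,a2,r) = 1 and r ∣ c1·a1 + c2·a2 (i.e., a/r lies on L(c)). Then there exists a unique pair (b, e) with b ∈ O, |b| < |r|, gcd(b,r) = 1, and e = (e1,e2) ∈ O² with max(|e1|,|e2|) < max(|c1|,|c2|), such that a = b·(−c2, c1) + r·e. -/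
/-!
Write `u c₁ + v c₂ = 1`. Since `c₁ a₁ + c₂ a₂ ≡ 0 mod r`, the polynomial `b₀ = u a₂ - v a₁`
satisfies `a ≡ b₀ (-c₂, c₁) mod r`; reducing `b₀` modulo `r` gives `b`, and `e` is the quotient.
The bound on `e` comes from the ultrametric inequality: `|r e| = |a - b (-c₂, c₁)| < |r| |c|`.
`b` is coprime to `r` because a common divisor of `b` and `r` divides `a₁`, `a₂` and `r`.
For uniqueness, two solutions give `r ∣ (b - b') c₁` and `r ∣ (b - b') c₂`, so `r ∣ b - b'`,
which forces `b = b'` as `|b - b'| < |r|`.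
-/

set_option autoImplicit false

noncomputable section

open Polynomial Matrix
open scoped Classical

variable {Fq : Type} [Field Fq] [Fintype Fq]

lemma Oabs_eq_cardPowDegree (x : Fq[X]) : Oabs x = (cardPowDegree x : ℝ) := by
  rw [Oabs, cardPowDegree_apply]
  split_ifs <;> simp

lemma Oabs_mul (x y : Fq[X]) : Oabs (x * y) = Oabs x * Oabs y := by
  simp only [Oabs_eq_cardPowDegree, map_mul, Int.cast_mul]

lemma Oabs_neg (x : Fq[X]) : Oabs (-x) = Oabs x := by
  simp only [Oabs_eq_cardPowDegree, map_neg_eq_map]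

lemma Oabs_nonneg (x : Fq[X]) : 0 ≤ Oabs x := by
  rw [Oabs_eq_cardPowDegree]
  exact_mod_cast cardPowDegree.nonneg x

lemma one_le_Oabs {x : Fq[X]} (hx : x ≠ 0) : 1 ≤ Oabs x := by
  rw [Oabs, if_neg hx]
  exact one_le_pow₀ (by exact_mod_cast Fintype.card_pos)

lemma Oabs_lt_Oabs_iff {x y : Fq[X]} : Oabs x < Oabs y ↔ x.degree < y.degree := by
  simp only [Oabs_eq_cardPowDegree, Int.cast_lt]
  exact cardPowDegree_isEuclidean.map_lt_map_iff

lemma Oabs_le_Oabs_iff {x y : Fq[X]} : Oabs x ≤ Oabs y ↔ x.degree ≤ y.degree := by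
  simp only [← not_lt, Oabs_lt_Oabs_iff]

lemma Oabs_add_le_max (x y : Fq[X]) : Oabs (x + y) ≤ max (Oabs x) (Oabs y) := by
  rcases le_total x.degree y.degree with h | h
  · exact (Oabs_le_Oabs_iff.2 ((degree_add_le x y).trans (max_le h le_rfl))).trans
      (le_max_right _ _)
  · exact (Oabs_le_Oabs_iff.2 ((degree_add_le x y).trans (max_le le_rfl h))).trans
      (le_max_left _ _)

lemma eq_zero_of_dvd_of_Oabs_lt {r x : Fq[X]} (hd : r ∣ x) (h : Oabs x < Oabs r) : x = 0 :=
  eq_zero_of_dvd_of_degree_lt hd (Oabs_lt_Oabs_iff.1 h)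

lemma Primitive.one_le_Oabs2 {c : Fq[X] × Fq[X]} (hc : Primitive c) : 1 ≤ Oabs2 c := by
  rcases hc.2 with h | ⟨-, h⟩
  · exact (one_le_Oabs h.ne_zero).trans (le_max_left _ _)
  · exact (one_le_Oabs h.ne_zero).trans (le_max_right _ _)

lemma Oabs_lt_of_eq_mul_add {x y b r e : Fq[X]} {C : ℝ} (hC : 1 ≤ C) (hx : Oabs x < Oabs r)
    (hb : Oabs b < Oabs r) (hy : Oabs y ≤ C) (h : x = b * y + r * e) : Oabs e < C := by
  have hr : 0 < Oabs r := (Oabs_nonneg b).trans_lt hb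
  have hx' : Oabs x < Oabs r * C := hx.trans_le (le_mul_of_one_le_right hr.le hC)
  have hby : Oabs (b * -y) < Oabs r * C := by
    rw [Oabs_mul, Oabs_neg]
    exact mul_lt_mul_of_lt_of_le_of_nonneg_of_pos hb hy (Oabs_nonneg b) (by linarith)
  have hre : Oabs r * Oabs e < Oabs r * C := by
    calc Oabs r * Oabs e = Oabs (x + b * -y) := by rw [← Oabs_mul, h]; ring_nf
      _ ≤ max (Oabs x) (Oabs (b * -y)) := Oabs_add_le_max _ _
      _ < Oabs r * C := max_lt hx' hby
  exact lt_of_mul_lt_mul_left hre hr.le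

lemma isCoprime_of_eq_mul_add {K : Type} [Field K] {a₁ a₂ b r y₁ y₂ e₁ e₂ : K[X]}
    (hco : CoprimeTriple a₁ a₂ r)
    (h₁ : a₁ = b * y₁ + r * e₁) (h₂ : a₂ = b * y₂ + r * e₂) : IsCoprime b r :=
  IsRelPrime.isCoprime fun d hdb hdr ↦ hco d
    (h₁ ▸ dvd_add (hdb.mul_right _) (hdr.mul_right _))
    (h₂ ▸ dvd_add (hdb.mul_right _) (hdr.mul_right _)) hdr

lemma exists_eq_mul_add {c₁ c₂ r a₁ a₂ : Fq[X]} (hc : IsCoprime c₁ c₂) (hr : r.Monic)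
    (hline : r ∣ c₁ * a₁ + c₂ * a₂) :
    ∃ b e₁ e₂, Oabs b < Oabs r ∧ a₁ = b * -c₂ + r * e₁ ∧ a₂ = b * c₁ + r * e₂ := by
  obtain ⟨u, v, huv⟩ := hc
  obtain ⟨m, hm⟩ := hline
  set b₀ := u * a₂ - v * a₁
  have hdiv : b₀ %ₘ r + r * (b₀ /ₘ r) = b₀ := modByMonic_add_div b₀ r
  refine ⟨b₀ %ₘ r, u * m - b₀ /ₘ r * c₂, v * m + b₀ /ₘ r * c₁,
    Oabs_lt_Oabs_iff.2 (degree_modByMonic_lt b₀ hr), ?_, ?_⟩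
  · linear_combination u * hm - a₁ * huv + c₂ * hdiv
  · linear_combination v * hm - a₂ * huv - c₁ * hdiv

lemma eq_of_mul_add_eq_mul_add {c₁ c₂ r b b' e₁ e₁' e₂ e₂' : Fq[X]} (hc : IsCoprime c₁ c₂)
    (hr : r ≠ 0) (hb : Oabs b < Oabs r) (hb' : Oabs b' < Oabs r)
    (h₁ : b * -c₂ + r * e₁ = b' * -c₂ + r * e₁') (h₂ : b * c₁ + r * e₂ = b' * c₁ + r * e₂') :
    b = b' ∧ e₁ = e₁' ∧ e₂ = e₂' := by
  obtain ⟨u, v, huv⟩ := hc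
  have hdvd : r ∣ b - b' := ⟨u * (e₂' - e₂) + v * (e₁ - e₁'), by
    linear_combination u * h₂ - v * h₁ - (b - b') * huv⟩
  have hlt : Oabs (b - b') < Oabs r := by
    rw [sub_eq_add_neg]
    exact (Oabs_add_le_max _ _).trans_lt (max_lt hb (by rwa [Oabs_neg]))
  obtain rfl : b = b' := sub_eq_zero.1 (eq_zero_of_dvd_of_Oabs_lt hdvd hlt)
  exact ⟨rfl, mul_left_cancel₀ hr (add_left_cancel h₁), mul_left_cancel₀ hr (add_left_cancel h₂)⟩

/-- For a primitive pair `c` and a rational point `a/r` on `L(c)`, there is a unique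
representation `a = b·(−c₂, c₁) + r·e` with `|b| < |r|`, `gcd(b,r) = 1` and `|e| < |c|`. -/
theorem stmt_12 (Fq : Type) [Field Fq] [Fintype Fq]
    (c : Fq[X] × Fq[X]) (hc : Primitive c)
    (r : Fq[X]) (hr : r.Monic)
    (a : Fq[X] × Fq[X]) (ha : Oabs2 a < Oabs r) (hco : CoprimeTriple a.1 a.2 r)
    (hline : r ∣ c.1 * a.1 + c.2 * a.2) :
    ∃! be : Fq[X] × (Fq[X] × Fq[X]),
      Oabs be.1 < Oabs r ∧ IsCoprime be.1 r ∧
      Oabs2 be.2 < Oabs2 c ∧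
      a.1 = be.1 * (-c.2) + r * be.2.1 ∧ a.2 = be.1 * c.1 + r * be.2.2 := by
  obtain ⟨b, e₁, e₂, hb, h₁, h₂⟩ := exists_eq_mul_add hc.1 hr hline
  have he₁ : Oabs e₁ < Oabs2 c := Oabs_lt_of_eq_mul_add hc.one_le_Oabs2
    ((le_max_left _ _).trans_lt ha) hb ((Oabs_neg c.2).trans_le (le_max_right _ _)) h₁
  have he₂ : Oabs e₂ < Oabs2 c := Oabs_lt_of_eq_mul_add hc.one_le_Oabs2
    ((le_max_right _ _).trans_lt ha) hb (le_max_left _ _) h₂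
  refine ⟨(b, e₁, e₂), ⟨hb, isCoprime_of_eq_mul_add hco h₁ h₂, max_lt he₁ he₂, h₁, h₂⟩, ?_⟩
  rintro ⟨b', e₁', e₂'⟩ ⟨hb', -, -, h₁', h₂'⟩
  obtain ⟨rfl, rfl, rfl⟩ :=
    eq_of_mul_add_eq_mul_add hc.1 hr.ne_zero hb' hb (h₁'.symm.trans h₁) (h₂'.symm.trans h₂)
  rfl
end
end
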